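/- arXiv:2111.00552 — 5 statements merged into one kernel-verified Lean document; each statement's English description precedes it below -/
import Mathlib

section
/- At the initial step, for every i ∈ {1,…,m} one has λ_{0,i}² ≤ (η'·v_{0,i})², and for every macro step k ≥ 1 and every i ∈ {1,…,m} one has λ_{k,i}² ≥ (η'·v_{k,i})². (Lemma 1, part 3, of the paper, stated for an arbitrary sequence of constraint values.) -/
/-- Lemma 1, part 3: at step 0 the dual variable is dominated (in square) by the
scaled constraint value, and at every later step it dominates it. -/
theorem modified_dual_square_bounds (m : ℕ) (hm : 1 ≤ m) (η' : ℝ) (hη' : 0 < η')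
    (v lam : ℕ → Fin m → ℝ)
    (h0 : ∀ i, lam 0 i = max 0 (-η' * v 0 i))
    (hrec : ∀ k i, lam (k + 1) i = max (-η' * v (k + 1) i) (lam k i + η' * v (k + 1) i)) :
    (∀ i, (lam 0 i) ^ 2 ≤ (η' * v 0 i) ^ 2) ∧
      (∀ k, 1 ≤ k → ∀ i, (η' * v k i) ^ 2 ≤ (lam k i) ^ 2) := by
  have hnn : ∀ k i, 0 ≤ lam k i := by
    intro k
    induction k with
    | zero => intro i; rw [h0 i]; exact le_max_left _ _
    | succ k ih =>
      intro i
      rw [hrec k i]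
      rcases le_total 0 (η' * v (k + 1) i) with h | h
      · exact le_max_of_le_right (by linarith [ih i])
      · exact le_max_of_le_left (by linarith)
  constructor
  · intro i
    rw [h0 i]
    rcases le_total (-η' * v 0 i) 0 with h | h
    · rw [max_eq_left h]; simpa using sq_nonneg (η' * v 0 i)
    · rw [max_eq_right h]
      have : -η' * v 0 i = -(η' * v 0 i) := by ring
      rw [this, neg_pow]; simp
  · intro k hk i
    obtain ⟨j, rfl⟩ := Nat.exists_eq_add_of_le hk
    rw [Nat.add_comm 1 j]
    have h := hrec j i
    have hmx : -η' * v (j + 1) i ≤ lam (j + 1) i := by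
      rw [h]; exact le_max_left _ _
    have h1 : -(lam (j + 1) i) ≤ η' * v (j + 1) i := by linarith
    have h2 : η' * v (j + 1) i ≤ lam (j + 1) i := by
      calc η' * v (j + 1) i ≤ lam j i + η' * v (j + 1) i := by linarith [hnn j i]
        _ ≤ _ := by rw [h]; exact le_max_right _ _
    exact sq_le_sq' h1 h2
end

section
/- Let η' > 0 and let λ, w be real numbers. If λ' = max(−η'·w, λ + η'·w), then λ·w ≥ (1/(2η'))·λ'² − (1/(2η'))·λ² − η'·w². (Single-coordinate core inequality in the proof of Lemma B.3 of the paper.) -/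
/-- Single-coordinate core inequality of Lemma B.3. -/
theorem dual_update_core_ineq (η' lam w lam' : ℝ) (hη' : 0 < η')
    (h : lam' = max (-η' * w) (lam + η' * w)) :
    lam * w ≥ 1 / (2 * η') * lam' ^ 2 - 1 / (2 * η') * lam ^ 2 - η' * w ^ 2 := by
  have h2 : (0:ℝ) < 2 * η' := by positivity
  have key : 1 / (2 * η') * lam ^ 2 * (2 * η') = lam ^ 2 := by
    field_simp
  rcases max_cases (-η' * w) (lam + η' * w) with ⟨h1, _⟩ | ⟨h1, _⟩ <;>
    rw [h1] at h <;> subst h <;> rw [ge_iff_le, sub_sub, sub_le_iff_le_add,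
      div_mul_eq_mul_div, div_le_iff₀ h2] <;>
    nlinarith [sq_nonneg (lam + η' * w), sq_nonneg (η' * w), key]
end

section
/- For every k ≥ 0, the modified dual update satisfies ⟨λ_k, v_{k+1}⟩ ≥ (1/(2η'))·‖λ_{k+1}‖² − (1/(2η'))·‖λ_k‖² − η'·‖v_{k+1}‖², where ⟨·,·⟩ and ‖·‖ denote the Euclidean inner product and norm on ℝ^m. (Lemma B.3 of the paper, stated for an arbitrary sequence of constraint values.) -/
open scoped RealInnerProductSpace

/-! Coordinatewise, `max (-η' x) (a + η' x)` is one of its two arguments, so its square is at most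
`(a + η' x) ^ 2 + (η' x) ^ 2`. Summing over coordinates gives
`‖λ_{k+1}‖² ≤ ‖λ_k + η' v_{k+1}‖² + η'² ‖v_{k+1}‖²`; expanding the first square and dividing
by `2 η'` is the claim. -/

lemma sq_max_le_sq_add_sq (p q : ℝ) : max p q ^ 2 ≤ p ^ 2 + q ^ 2 := by
  rcases max_cases p q with ⟨h, _⟩ | ⟨h, _⟩ <;> rw [h] <;> nlinarith [sq_nonneg p, sq_nonneg q]

lemma EuclideanSpace.norm_sq_le_add_of_forall_sq_le {ι : Type*} [Fintype ι]
    {x y z : EuclideanSpace ℝ ι} (h : ∀ i, x i ^ 2 ≤ y i ^ 2 + z i ^ 2) :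
    ‖x‖ ^ 2 ≤ ‖y‖ ^ 2 + ‖z‖ ^ 2 := by
  simp only [EuclideanSpace.norm_sq_eq, Real.norm_eq_abs, sq_abs, ← Finset.sum_add_distrib]
  exact Finset.sum_le_sum fun i _ => h i

theorem dual_update_inner_bound_general (m : ℕ) (η' : ℝ) (hη' : 0 < η')
    (v lam : ℕ → EuclideanSpace ℝ (Fin m))
    (hrec : ∀ k i, lam (k + 1) i = max (-η' * v (k + 1) i) (lam k i + η' * v (k + 1) i)) :
    ∀ k, ⟪lam k, v (k + 1)⟫ ≥
      1 / (2 * η') * ‖lam (k + 1)‖ ^ 2 - 1 / (2 * η') * ‖lam k‖ ^ 2 - η' * ‖v (k + 1)‖ ^ 2 := by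
  intro k
  have hstep : ‖lam (k + 1)‖ ^ 2 ≤ ‖lam k + η' • v (k + 1)‖ ^ 2 + ‖η' • v (k + 1)‖ ^ 2 :=
    EuclideanSpace.norm_sq_le_add_of_forall_sq_le fun i => by
      simpa [hrec, add_comm, neg_mul, neg_sq] using
        sq_max_le_sq_add_sq (-η' * v (k + 1) i) (lam k i + η' * v (k + 1) i)
  rw [norm_add_sq_real, inner_smul_right, norm_smul, Real.norm_of_nonneg hη'.le] at hstep
  rw [ge_iff_le, ← sub_nonneg]
  field_simp
  linarith

/-- Lemma B.3: the modified dual update lower-bounds the inner product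
⟨λ_k, v_{k+1}⟩ in terms of Euclidean norms. -/
theorem dual_update_inner_bound (m : ℕ) (hm : 1 ≤ m) (η' : ℝ) (hη' : 0 < η')
    (v lam : ℕ → EuclideanSpace ℝ (Fin m))
    (h0 : ∀ i, lam 0 i = max 0 (-η' * v 0 i))
    (hrec : ∀ k i, lam (k + 1) i = max (-η' * v (k + 1) i) (lam k i + η' * v (k + 1) i)) :
    ∀ k, ⟪lam k, v (k + 1)⟫ ≥
      1 / (2 * η') * ‖lam (k + 1)‖ ^ 2 - 1 / (2 * η') * ‖lam k‖ ^ 2 - η' * ‖v (k + 1)‖ ^ 2 :=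
  dual_update_inner_bound_general m η' hη' v lam hrec
end

section
/- For every K ≥ 1 and every i ∈ {1,…,m}, the cumulative constraint values are bounded by the final dual variable: Σ_{k=1}^{K} v_{k,i} ≤ λ_{K,i}/η' ≤ ‖λ_K‖/η', where ‖·‖ is the Euclidean norm on ℝ^m. (The telescoping bound (cvb-st-1) proved in the constraint-violation part of Theorem 1 of the paper.) -/
/-! Each step of the recursion gives `λ_{k+1,i} ≥ λ_{k,i} + η' v_{k+1,i}`, so summing
telescopes to `η' ∑_{k=1}^K v_{k,i} ≤ λ_{K,i} - λ_{0,i} ≤ λ_{K,i}`, as `λ_{0,i} ≥ 0`. -/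

open Finset

theorem sum_Icc_le_sub_of_add_le_succ {α : Type*} [AddCommGroup α] [PartialOrder α]
    [IsOrderedAddMonoid α] {a b : ℕ → α} (h : ∀ k, a k + b (k + 1) ≤ a (k + 1)) (n : ℕ) :
    ∑ k ∈ Icc 1 n, b k ≤ a n - a 0 := by
  induction n with
  | zero => simp
  | succ n ih =>
    rw [sum_Icc_succ_top (Nat.le_add_left 1 n)]
    calc ∑ k ∈ Icc 1 n, b k + b (n + 1) ≤ a n - a 0 + b (n + 1) := add_le_add_left ih _
      _ = a n + b (n + 1) - a 0 := by abel
      _ ≤ a (n + 1) - a 0 := sub_le_sub_right (h n) _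

theorem EuclideanSpace.apply_le_norm {ι : Type*} [Fintype ι] (x : EuclideanSpace ℝ ι) (i : ι) :
    x i ≤ ‖x‖ :=
  (Real.le_norm_self _).trans (PiLp.norm_apply_le x i)

theorem cumulative_constraint_bound_general (m : ℕ) (η' : ℝ) (hη' : 0 < η')
    (v lam : ℕ → EuclideanSpace ℝ (Fin m))
    (h0 : ∀ i, lam 0 i = max 0 (-η' * v 0 i))
    (hrec : ∀ k i, lam (k + 1) i = max (-η' * v (k + 1) i) (lam k i + η' * v (k + 1) i)) :
    ∀ K, 1 ≤ K → ∀ i,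
      (∑ k ∈ Finset.Icc 1 K, v k i) ≤ lam K i / η' ∧ lam K i / η' ≤ ‖lam K‖ / η' := by
  intro K _ i
  have hstep : ∀ k, lam k i + η' * v (k + 1) i ≤ lam (k + 1) i := fun k =>
    (hrec k i).symm ▸ le_max_right _ _
  have hinit : 0 ≤ lam 0 i := (h0 i).symm ▸ le_max_left _ _
  have htele := sum_Icc_le_sub_of_add_le_succ
    (a := fun k => lam k i) (b := fun k => η' * v k i) hstep K
  rw [← mul_sum] at htele
  refine ⟨?_, div_le_div_of_nonneg_right (EuclideanSpace.apply_le_norm _ i) hη'.le⟩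
  rw [le_div_iff₀ hη', mul_comm]
  linarith

/-- The telescoping bound (cvb-st-1): cumulative constraint values are bounded by
the final dual variable. -/
theorem cumulative_constraint_bound (m : ℕ) (hm : 1 ≤ m) (η' : ℝ) (hη' : 0 < η')
    (v lam : ℕ → EuclideanSpace ℝ (Fin m))
    (h0 : ∀ i, lam 0 i = max 0 (-η' * v 0 i))
    (hrec : ∀ k i, lam (k + 1) i = max (-η' * v (k + 1) i) (lam k i + η' * v (k + 1) i)) :
    ∀ K, 1 ≤ K → ∀ i,
      (∑ k ∈ Finset.Icc 1 K, v k i) ≤ lam K i / η' ∧ lam K i / η' ≤ ‖lam K‖ / η' :=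
  cumulative_constraint_bound_general m η' hη' v lam h0 hrec
end

section
/- For all d, d' : S×A → ℝ with d(s,a) > 0 and d'(s,a) > 0 for every (s,a), the pseudo KL-divergence equals the Bregman divergence generated by φ: Σ_{(s,a)} d(s,a)·log( (d(s,a)/d(s)) / (d'(s,a)/d'(s)) ) = φ(d) − φ(d') − Σ_{(s,a)} (log d'(s,a) − log d'(s))·(d(s,a) − d'(s,a)). (Lemma A.6 of the paper: the pseudo KL-divergence D̃ is the Bregman divergence of φ.) -/
/-- Lemma A.6: the pseudo KL-divergence between positive `d` and `d'` equals the
Bregman divergence generated by φ. -/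
theorem pseudoKL_eq_bregman (S A : Type*) [Fintype S] [Fintype A] [Nonempty S] [Nonempty A]
    (d d' : S × A → ℝ) (hd : ∀ p, 0 < d p) (hd' : ∀ p, 0 < d' p) :
    (∑ p : S × A, d p *
        Real.log ((d p / (∑ a : A, d (p.1, a))) / (d' p / (∑ a : A, d' (p.1, a))))) =
      ((∑ p : S × A, d p * Real.log (d p)) -
          ∑ s : S, (∑ a : A, d (s, a)) * Real.log (∑ a : A, d (s, a))) -
        ((∑ p : S × A, d' p * Real.log (d' p)) -
          ∑ s : S, (∑ a : A, d' (s, a)) * Real.log (∑ a : A, d' (s, a))) -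
        ∑ p : S × A, (Real.log (d' p) - Real.log (∑ a : A, d' (p.1, a))) * (d p - d' p) := by
  have hD : ∀ s : S, 0 < ∑ a : A, d (s, a) := fun s =>
    Finset.sum_pos (fun a _ => hd _) Finset.univ_nonempty
  have hD' : ∀ s : S, 0 < ∑ a : A, d' (s, a) := fun s =>
    Finset.sum_pos (fun a _ => hd' _) Finset.univ_nonempty
  have h1 : (∑ s : S, (∑ a : A, d (s, a)) * Real.log (∑ a : A, d (s, a)))
      = ∑ p : S × A, d p * Real.log (∑ a : A, d (p.1, a)) := by
    rw [Fintype.sum_prod_type]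
    exact Finset.sum_congr rfl fun s _ => by rw [Finset.sum_mul]
  have h2 : (∑ s : S, (∑ a : A, d' (s, a)) * Real.log (∑ a : A, d' (s, a)))
      = ∑ p : S × A, d' p * Real.log (∑ a : A, d' (p.1, a)) := by
    rw [Fintype.sum_prod_type]
    exact Finset.sum_congr rfl fun s _ => by rw [Finset.sum_mul]
  rw [h1, h2, ← Finset.sum_sub_distrib, ← Finset.sum_sub_distrib, ← Finset.sum_sub_distrib,
    ← Finset.sum_sub_distrib]
  refine Finset.sum_congr rfl fun p _ => ?_
  rw [Real.log_div (div_ne_zero (hd p).ne' (hD p.1).ne') (div_ne_zero (hd' p).ne' (hD' p.1).ne'),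
    Real.log_div (hd p).ne' (hD p.1).ne', Real.log_div (hd' p).ne' (hD' p.1).ne']
  ring
end
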